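/- arXiv:2305.09526 — 7 statements merged into one kernel-verified Lean document; each statement's English description precedes it below -/
import Mathlib

section
/- Let T ≥ 1 be an integer, G > 0, d̄ > 0, and let P_{E|1} ≤ P_{E|2} ≤ ... ≤ P_{E|T} ≤ 1 be error probabilities. Define f_s(q) = 1 - exp(-G·d̄·q) · Σ_{t=1}^{T} (1 - P_{E|t}) · (G·d̄·q)^{t-1}/(t-1)!. Then the derivative of f_s satisfies f_s'(q) = G·d̄·exp(-G·d̄·q) · Σ_{t=1}^{T} (P_{E|t+1} - P_{E|t}) · (G·d̄·q)^{t-1}/(t-1)!, where P_{E|T+1} = 1, and hence f_s'(q) ≥ 0 for all q ≥ 0. -/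
/-- Shift lemma: if `A T = 0` then the differentiated sum re-indexes. -/
lemma key_shift (T : ℕ) (hT : 1 ≤ T) (x : ℝ) (A : ℕ → ℝ) (hA : A T = 0) :
    ∑ t ∈ Finset.range T, A t * (t * x ^ (t - 1)) / (Nat.factorial t)
      = ∑ t ∈ Finset.range T, A (t + 1) * x ^ t / (Nat.factorial t) := by
  obtain ⟨n, rfl⟩ : ∃ n, T = n + 1 := ⟨T - 1, (Nat.succ_pred_eq_of_pos hT).symm⟩
  rw [Finset.sum_range_succ' (fun t => A t * (t * x ^ (t - 1)) / (Nat.factorial t)) n,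
    Finset.sum_range_succ]
  simp only [hA, Nat.cast_zero, zero_mul, mul_zero, zero_div, add_zero, pow_zero]
  apply Finset.sum_congr rfl
  intro t _
  have hfac : (Nat.factorial (t + 1) : ℝ) = (t + 1) * Nat.factorial t := by
    rw [Nat.factorial_succ]; push_cast; ring
  have h0 : (Nat.factorial t : ℝ) ≠ 0 := Nat.cast_ne_zero.mpr (Nat.factorial_ne_zero t)
  have h1 : ((t : ℝ) + 1) ≠ 0 := by positivity
  rw [hfac]
  simp only [Nat.add_sub_cancel, Nat.cast_add, Nat.cast_one]
  field_simp

/-- Derivative of the IRSA slot-node density-evolution function with T-fold MPR,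
and its nonnegativity under monotone error probabilities. -/
theorem stmt0 (T : ℕ) (hT : 1 ≤ T) (G dbar : ℝ) (hG : 0 < G) (hd : 0 < dbar)
    (P : ℕ → ℝ)
    (hmono : ∀ t, 1 ≤ t → t < T → P t ≤ P (t + 1))
    (hPT : P T ≤ 1) (hTop : P (T + 1) = 1) :
    (∀ q : ℝ, HasDerivAt
      (fun q : ℝ => 1 - Real.exp (-(G * dbar * q)) *
        ∑ t ∈ Finset.range T, (1 - P (t + 1)) * (G * dbar * q) ^ t / (Nat.factorial t))
      (G * dbar * Real.exp (-(G * dbar * q)) *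
        ∑ t ∈ Finset.range T, (P (t + 2) - P (t + 1)) * (G * dbar * q) ^ t / (Nat.factorial t)) q)
    ∧ ∀ q : ℝ, 0 ≤ q →
      0 ≤ G * dbar * Real.exp (-(G * dbar * q)) *
        ∑ t ∈ Finset.range T, (P (t + 2) - P (t + 1)) * (G * dbar * q) ^ t / (Nat.factorial t) := by
  set c := G * dbar with hc
  have hcpos : 0 < c := mul_pos hG hd
  constructor
  · intro q
    -- derivative of the exponential
    have hlin : HasDerivAt (fun q : ℝ => -(c * q)) (-c) q := by
      simpa using ((hasDerivAt_id q).const_mul c).fun_neg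
    have hexp : HasDerivAt (fun q : ℝ => Real.exp (-(c * q)))
        (Real.exp (-(c * q)) * (-c)) q := (Real.hasDerivAt_exp _).comp q hlin
    -- derivative of the sum
    have hsum : HasDerivAt
        (fun q : ℝ => ∑ t ∈ Finset.range T, (1 - P (t + 1)) * (c * q) ^ t / (Nat.factorial t))
        (∑ t ∈ Finset.range T,
          (1 - P (t + 1)) * ((t : ℝ) * (c * q) ^ (t - 1) * c) / (Nat.factorial t)) q := by
      apply HasDerivAt.fun_sum
      intro t _
      have hbase : HasDerivAt (fun q : ℝ => c * q) c q := by
        simpa using (hasDerivAt_id q).const_mul c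
      have hp : HasDerivAt (fun q : ℝ => (c * q) ^ t)
          ((t : ℝ) * (c * q) ^ (t - 1) * c) q := hbase.pow t
      exact (hp.const_mul _).div_const _
    have hprod := hexp.mul hsum
    have hmain := hprod.const_sub 1
    convert hmain using 1
    · rfl
    · rfl
    · rfl
    -- prove the derivative values agree
    have hshift := key_shift T hT (c * q) (fun t => 1 - P (t + 1)) (by simp [hTop])
    have hfac : ∀ t ∈ Finset.range T,
        (1 - P (t + 1)) * ((t : ℝ) * (c * q) ^ (t - 1) * c) / (Nat.factorial t)
        = c * ((1 - P (t + 1)) * ((t : ℝ) * (c * q) ^ (t - 1)) / (Nat.factorial t)) := by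
      intro t _; ring
    rw [Finset.sum_congr rfl hfac, ← Finset.mul_sum, hshift]
    rw [show (∑ t ∈ Finset.range T, (P (t + 2) - P (t + 1)) * (c * q) ^ t / (Nat.factorial t))
        = (∑ t ∈ Finset.range T, (1 - P (t + 1)) * (c * q) ^ t / (Nat.factorial t))
          - (∑ t ∈ Finset.range T, (1 - P (t + 1 + 1)) * (c * q) ^ t / (Nat.factorial t)) from by
      rw [← Finset.sum_sub_distrib]
      exact Finset.sum_congr rfl fun t _ => by ring]
    ring
  · intro q hq
    have h1 : 0 ≤ c * Real.exp (-(c * q)) :=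
      mul_nonneg hcpos.le (Real.exp_nonneg _)
    have h2 : 0 ≤ ∑ t ∈ Finset.range T,
        (P (t + 2) - P (t + 1)) * (c * q) ^ t / (Nat.factorial t) := by
      apply Finset.sum_nonneg
      intro t ht
      have htT : t < T := Finset.mem_range.mp ht
      have hPd : 0 ≤ P (t + 2) - P (t + 1) := by
        rcases lt_or_eq_of_le (Nat.succ_le_of_lt htT) with h | h
        · have := hmono (t + 1) (Nat.le_add_left 1 t) h
          linarith
        · have : P (t + 2) = 1 := by rw [show t + 2 = T + 1 by omega] at *; exact hTop
          rw [this, show t + 1 = T from h]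
          linarith
      have hpow : 0 ≤ (c * q) ^ t := pow_nonneg (mul_nonneg hcpos.le hq) t
      positivity
    calc (0:ℝ) ≤ (c * Real.exp (-(c * q))) * ∑ t ∈ Finset.range T,
          (P (t + 2) - P (t + 1)) * (c * q) ^ t / (Nat.factorial t) := mul_nonneg h1 h2
      _ = _ := by ring
end

section
/- For any integer T ≥ 1, G > 0, η > 0, and probabilities 0 ≤ P_{E|1} ≤ ... ≤ P_{E|T} ≤ 1, the slot-node function f_s(q) = 1 - exp(-Gq/η)·Σ_{t=1}^{T}(1-P_{E|t})·(Gq/η)^{t-1}/(t-1)! satisfies ∫_0^1 f_s(q) dq = 1 - Σ_{t=1}^{T} (1 - P_{E|t}) · (η/G) · [1 - exp(-G/η)·Σ_{k=0}^{t-1} (1/k!)·(G/η)^k]. -/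
lemma key_int (c : ℝ) (hc : 0 < c) (t : ℕ) :
    ∫ q in (0:ℝ)..1, Real.exp (-(c*q)) * (c*q)^t / (Nat.factorial t)
    = (1/c) * (1 - Real.exp (-c) * ∑ k ∈ Finset.range (t+1), c^k / (Nat.factorial k)) := by
  set F : ℝ → ℝ := fun q => -(1/c) * (Real.exp (-(c*q)) *
      ∑ k ∈ Finset.range (t+1), (c*q)^k / (Nat.factorial k)) with hF
  have hS : ∀ q : ℝ, HasDerivAt (fun q => ∑ k ∈ Finset.range (t+1), (c*q)^k / (Nat.factorial k))
      (c * ∑ k ∈ Finset.range t, (c*q)^k / (Nat.factorial k)) q := by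
    intro q
    have h1 : HasDerivAt (fun q => ∑ k ∈ Finset.range (t+1), (c*q)^k / (Nat.factorial k))
        (∑ k ∈ Finset.range (t+1), (k * (c*q)^(k-1) * c) / (Nat.factorial k)) q := by
      apply HasDerivAt.fun_sum
      intro k _
      simpa using (((hasDerivAt_id q).const_mul c).pow k).div_const (Nat.factorial k : ℝ)
    convert h1 using 1
    rw [Finset.sum_range_succ', Finset.mul_sum]
    simp only [Nat.cast_zero, zero_mul, pow_zero, Nat.factorial_zero, Nat.cast_one, div_one,
      add_zero, Nat.add_sub_cancel]
    apply Finset.sum_congr rfl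
    intro k _
    have hk : ((Nat.factorial (k+1) : ℝ)) = (k+1) * Nat.factorial k := by
      push_cast [Nat.factorial_succ]; ring
    have hkf : (Nat.factorial k : ℝ) ≠ 0 := Nat.cast_ne_zero.mpr (Nat.factorial_ne_zero k)
    rw [hk]
    push_cast
    field_simp
  have hD : ∀ q : ℝ, HasDerivAt F (Real.exp (-(c*q)) * (c*q)^t / (Nat.factorial t)) q := by
    intro q
    have hE : HasDerivAt (fun q : ℝ => Real.exp (-(c*q))) (Real.exp (-(c*q)) * (-c)) q := by
      simpa using (((hasDerivAt_id q).const_mul c).neg).exp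
    have := ((hE.mul (hS q)).const_mul (-(1/c)))
    refine this.congr_deriv ?_
    rw [Finset.sum_range_succ]
    have hcne : c ≠ 0 := hc.ne'
    field_simp
    ring
  have hcont : IntervalIntegrable (fun q => Real.exp (-(c*q)) * (c*q)^t / (Nat.factorial t))
      MeasureTheory.volume 0 1 := by
    apply Continuous.intervalIntegrable
    fun_prop
  rw [intervalIntegral.integral_eq_sub_of_hasDerivAt (fun q _ => hD q) hcont]
  have h0 : F 0 = -(1/c) := by
    simp only [hF, mul_zero]
    rw [Finset.sum_range_succ']
    simp
  have h1 : F 1 = -(1/c) * (Real.exp (-c) * ∑ k ∈ Finset.range (t+1), c^k / (Nat.factorial k)) := by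
    simp [hF]
  rw [h0, h1]
  ring

/-- Closed-form evaluation of the integral of the slot-node density-evolution
function for IRSA with T-MPR over a noisy channel. -/
theorem stmt3 (T : ℕ) (hT : 1 ≤ T) (G η : ℝ) (hG : 0 < G) (hη : 0 < η)
    (P : ℕ → ℝ) (hP : ∀ t, 1 ≤ t → t ≤ T → 0 ≤ P t ∧ P t ≤ 1)
    (hmono : ∀ t, 1 ≤ t → t < T → P t ≤ P (t + 1)) :
    (∫ q in (0 : ℝ)..1, (1 - Real.exp (-(G * q / η)) *
        ∑ t ∈ Finset.range T, (1 - P (t + 1)) * (G * q / η) ^ t / (Nat.factorial t)))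
    = 1 - ∑ t ∈ Finset.range T, (1 - P (t + 1)) * (η / G) *
        (1 - Real.exp (-(G / η)) *
          ∑ k ∈ Finset.range (t + 1), (1 / (Nat.factorial k : ℝ)) * (G / η) ^ k) := by
  set c := G / η with hc
  have hcpos : 0 < c := div_pos hG hη
  have heq : ∀ q : ℝ, (1 - Real.exp (-(G * q / η)) *
        ∑ t ∈ Finset.range T, (1 - P (t + 1)) * (G * q / η) ^ t / (Nat.factorial t))
      = 1 - ∑ t ∈ Finset.range T, (1 - P (t+1)) *
          (Real.exp (-(c*q)) * (c*q)^t / (Nat.factorial t)) := by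
    intro q
    have hq : G * q / η = c * q := by rw [hc]; ring
    rw [hq, Finset.mul_sum]
    congr 1
    apply Finset.sum_congr rfl
    intro t _
    ring
  rw [intervalIntegral.integral_congr (fun q _ => heq q)]
  have hint : ∀ t ∈ Finset.range T, IntervalIntegrable
      (fun q => (1 - P (t+1)) * (Real.exp (-(c*q)) * (c*q)^t / (Nat.factorial t)))
      MeasureTheory.volume 0 1 := by
    intro t _
    apply Continuous.intervalIntegrable
    fun_prop
  have hint2 : IntervalIntegrable
      (fun q => ∑ t ∈ Finset.range T, (1 - P (t+1)) * (Real.exp (-(c*q)) * (c*q)^t / (Nat.factorial t)))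
      MeasureTheory.volume 0 1 := by
    apply Continuous.intervalIntegrable
    exact continuous_finset_sum _ (fun t _ => by fun_prop)
  rw [intervalIntegral.integral_sub intervalIntegrable_const hint2,
    intervalIntegral.integral_finset_sum hint]
  simp only [intervalIntegral.integral_const_mul, intervalIntegral.integral_const,
    smul_eq_mul, sub_zero, mul_one, one_mul]
  congr 1
  refine Finset.sum_congr rfl fun t _ => ?_
  rw [key_int c hcpos t]
  have h1c : (1/c) = η / G := by rw [hc, one_div_div]
  rw [h1c]
  have hsum : ∑ k ∈ Finset.range (t+1), c^k / (Nat.factorial k)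
      = ∑ k ∈ Finset.range (t+1), (1 / (Nat.factorial k : ℝ)) * c^k := by
    refine Finset.sum_congr rfl fun k _ => ?_; ring
  rw [hsum]; ring
end

section
/- Fix an integer T ≥ 1, η > 0, probabilities 0 ≤ P_{E|1} ≤ ... ≤ P_{E|T} < 1, Λ_1 ∈ [0,1], e ≥ 0 with c := Λ_1·P_{E|1}(1+e) + (1-Λ_1)·P_{E|1}²(1+e)² < 1. If (1-P_{E|1})/η > 1 - c, then the equation G·(1 - c) = Σ_{t=1}^{T} (1 - P_{E|t})·[1 - exp(-G/η)·Σ_{k=0}^{t-1} (1/k!)·(G/η)^k] has a unique positive real root G. -/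
private lemma expS_deriv (t : ℕ) (x : ℝ) :
    HasDerivAt (fun y => Real.exp (-y) * ∑ k ∈ Finset.range (t + 1),
      (1 / (Nat.factorial k : ℝ)) * y ^ k)
      (-(Real.exp (-x) * x ^ t / (Nat.factorial t : ℝ))) x := by
  induction t with
  | zero =>
      have h : HasDerivAt (fun y : ℝ => Real.exp (-y)) (-Real.exp (-x)) x := by
        simpa [Function.comp_def] using (Real.hasDerivAt_exp (-x)).comp x (hasDerivAt_neg x)
      have heq : (fun y : ℝ => Real.exp (-y) * ∑ k ∈ Finset.range 1,
          (1 / (Nat.factorial k : ℝ)) * y ^ k) = fun y => Real.exp (-y) := by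
        funext y; simp
      rw [heq]
      simpa using h
  | succ t ih =>
      have hexp : HasDerivAt (fun y : ℝ => Real.exp (-y)) (-Real.exp (-x)) x := by
        simpa [Function.comp_def] using (Real.hasDerivAt_exp (-x)).comp x (hasDerivAt_neg x)
      have hpow : HasDerivAt (fun y : ℝ => (1 / (Nat.factorial (t + 1) : ℝ)) * y ^ (t + 1))
          ((1 / (Nat.factorial (t + 1) : ℝ)) * ((t + 1) * x ^ t)) x := by
        simpa using (hasDerivAt_pow (t + 1) x).const_mul (1 / (Nat.factorial (t + 1) : ℝ))
      have hsum := ih.add (hexp.mul hpow)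
      have heq : (fun y : ℝ => Real.exp (-y) * ∑ k ∈ Finset.range (t + 2),
          (1 / (Nat.factorial k : ℝ)) * y ^ k)
          = fun y => (Real.exp (-y) * ∑ k ∈ Finset.range (t + 1),
              (1 / (Nat.factorial k : ℝ)) * y ^ k)
            + Real.exp (-y) * ((1 / (Nat.factorial (t + 1) : ℝ)) * y ^ (t + 1)) := by
        funext y
        rw [Finset.sum_range_succ, mul_add]
      rw [heq]
      refine hsum.congr_deriv ?_
      have hfac : (Nat.factorial (t + 1) : ℝ) = (t + 1) * (Nat.factorial t : ℝ) := by
        push_cast [Nat.factorial_succ]; ring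
      have h0 : (Nat.factorial t : ℝ) ≠ 0 := Nat.cast_ne_zero.mpr (Nat.factorial_ne_zero t)
      have h1 : ((t : ℝ) + 1) ≠ 0 := by positivity
      rw [hfac]
      field_simp
      ring

private lemma v_deriv (t : ℕ) (x : ℝ) :
    HasDerivAt (fun y => Real.exp (-y) * y ^ t / (Nat.factorial t : ℝ))
      ((Real.exp (-x) * ((t : ℝ) * x ^ (t - 1)) - Real.exp (-x) * x ^ t) /
        (Nat.factorial t : ℝ)) x := by
  have hexp : HasDerivAt (fun y : ℝ => Real.exp (-y)) (-Real.exp (-x)) x := by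
    simpa [Function.comp_def] using (Real.hasDerivAt_exp (-x)).comp x (hasDerivAt_neg x)
  have := (hexp.mul (hasDerivAt_pow t x)).div_const (Nat.factorial t : ℝ)
  refine this.congr_deriv ?_
  ring

/-- Existence and uniqueness of the positive root defining the convergence
boundary 𝔾₁(η, Λ₁, T, P_E; e). -/
theorem stmt5 (T : ℕ) (hT : 1 ≤ T) (η : ℝ) (hη : 0 < η)
    (P : ℕ → ℝ) (hP : ∀ t, 1 ≤ t → t ≤ T → 0 ≤ P t ∧ P t < 1)
    (hmono : ∀ t, 1 ≤ t → t < T → P t ≤ P (t + 1))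
    (Λ1 e c : ℝ) (hΛ1 : Λ1 ∈ Set.Icc (0 : ℝ) 1) (he : 0 ≤ e)
    (hc : c = Λ1 * P 1 * (1 + e) + (1 - Λ1) * (P 1) ^ 2 * (1 + e) ^ 2)
    (hc1 : c < 1)
    (hslope : (1 - P 1) / η > 1 - c) :
    ∃! G : ℝ, 0 < G ∧
      G * (1 - c) = ∑ t ∈ Finset.range T, (1 - P (t + 1)) *
        (1 - Real.exp (-(G / η)) *
          ∑ k ∈ Finset.range (t + 1), (1 / (Nat.factorial k : ℝ)) * (G / η) ^ k) := by
  have hc0 : (0 : ℝ) < 1 - c := by linarith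
  set a : ℕ → ℝ := fun t => 1 - P (t + 1) with ha
  set φ : ℝ → ℝ := fun G =>
    (∑ t ∈ Finset.range T, a t *
      (1 - Real.exp (-(G / η)) *
        ∑ k ∈ Finset.range (t + 1), (1 / (Nat.factorial k : ℝ)) * (G / η) ^ k))
    - G * (1 - c) with hφdef
  set φ' : ℝ → ℝ := fun G =>
    (∑ t ∈ Finset.range T, a t *
      (Real.exp (-(G / η)) * (G / η) ^ t / (Nat.factorial t : ℝ)) / η) - (1 - c) with hφ'def
  set φ'' : ℝ → ℝ := fun G =>
    (∑ t ∈ Finset.range T, a t *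
      ((Real.exp (-(G / η)) * ((t : ℝ) * (G / η) ^ (t - 1))
        - Real.exp (-(G / η)) * (G / η) ^ t) / (Nat.factorial t : ℝ)) / η / η) with hφ''def
  have hdivη : ∀ G : ℝ, HasDerivAt (fun y : ℝ => y / η) (1 / η) G := fun G => by
    simpa using (hasDerivAt_id G).div_const η
  -- first derivative
  have hD1 : ∀ G : ℝ, HasDerivAt φ (φ' G) G := by
    intro G
    have hsum : HasDerivAt (fun G : ℝ => ∑ t ∈ Finset.range T, a t *
        (1 - Real.exp (-(G / η)) *
          ∑ k ∈ Finset.range (t + 1), (1 / (Nat.factorial k : ℝ)) * (G / η) ^ k))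
        (∑ t ∈ Finset.range T, a t *
          (Real.exp (-(G / η)) * (G / η) ^ t / (Nat.factorial t : ℝ)) / η) G := by
      apply HasDerivAt.fun_sum
      intro t _
      have h1 := ((expS_deriv t (G / η)).comp G (hdivη G)).const_sub 1 |>.const_mul (a t)
      refine h1.congr_deriv ?_
      field_simp
    have := hsum.sub ((hasDerivAt_id G).mul_const (1 - c))
    simp only [one_mul] at this
    exact this
  -- second derivative
  have hD2 : ∀ G : ℝ, HasDerivAt φ' (φ'' G) G := by
    intro G
    have hsum : HasDerivAt (fun G : ℝ => ∑ t ∈ Finset.range T, a t *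
        (Real.exp (-(G / η)) * (G / η) ^ t / (Nat.factorial t : ℝ)) / η)
        (∑ t ∈ Finset.range T, a t *
          ((Real.exp (-(G / η)) * ((t : ℝ) * (G / η) ^ (t - 1))
            - Real.exp (-(G / η)) * (G / η) ^ t) / (Nat.factorial t : ℝ)) / η / η) G := by
      apply HasDerivAt.fun_sum
      intro t _
      have h1 := (((v_deriv t (G / η)).comp G (hdivη G)).const_mul (a t)).div_const η
      refine h1.congr_deriv ?_
      field_simp
    exact hsum.sub_const (1 - c)
  have hcont : Continuous φ := by
    have : Differentiable ℝ φ := fun G => (hD1 G).differentiableAt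
    exact this.continuous
  -- second derivative is negative on the positives
  have hneg : ∀ G : ℝ, 0 < G → φ'' G < 0 := by
    intro G hG
    set x : ℝ := G / η with hx
    have hxpos : 0 < x := div_pos hG hη
    obtain ⟨N, rfl⟩ : ∃ N, T = N + 1 := ⟨T - 1, by omega⟩
    have hfac : ∀ n : ℕ, (0 : ℝ) < (Nat.factorial n : ℝ) := fun n => by
      exact_mod_cast Nat.factorial_pos n
    -- rewrite each summand
    have hterm : ∀ t ∈ Finset.range (N + 1), a t *
        ((Real.exp (-x) * ((t : ℝ) * x ^ (t - 1)) - Real.exp (-x) * x ^ t)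
          / (Nat.factorial t : ℝ)) / η / η
        = Real.exp (-x) / η / η *
          (a t * ((t : ℝ) * x ^ (t - 1)) / (Nat.factorial t : ℝ)
            - a t * x ^ t / (Nat.factorial t : ℝ)) := by
      intro t _
      field_simp
    have hsum_eq : φ'' G = Real.exp (-x) / η / η *
        ((∑ t ∈ Finset.range (N + 1), a t * ((t : ℝ) * x ^ (t - 1)) / (Nat.factorial t : ℝ))
          - ∑ t ∈ Finset.range (N + 1), a t * x ^ t / (Nat.factorial t : ℝ)) := by
      rw [hφ''def]
      simp only
      rw [Finset.sum_congr rfl hterm, ← Finset.mul_sum, Finset.sum_sub_distrib]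
    -- reindex the first sum
    have hS1 : (∑ t ∈ Finset.range (N + 1), a t * ((t : ℝ) * x ^ (t - 1)) / (Nat.factorial t : ℝ))
        = ∑ s ∈ Finset.range N, a (s + 1) * x ^ s / (Nat.factorial s : ℝ) := by
      rw [Finset.sum_range_succ']
      simp only [Nat.cast_zero, zero_mul, mul_zero, zero_div, add_zero]
      apply Finset.sum_congr rfl
      intro s _
      have h0 : (Nat.factorial s : ℝ) ≠ 0 := (hfac s).ne'
      have hfacS : (Nat.factorial (s + 1) : ℝ) = (s + 1) * (Nat.factorial s : ℝ) := by
        push_cast [Nat.factorial_succ]; ring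
      have h1 : ((s : ℝ) + 1) ≠ 0 := by positivity
      rw [hfacS]
      have : ((s + 1 : ℕ) : ℝ) = (s : ℝ) + 1 := by push_cast; ring
      rw [this]
      have : (s + 1) - 1 = s := by omega
      rw [this]
      field_simp
    have hS2 : (∑ t ∈ Finset.range (N + 1), a t * x ^ t / (Nat.factorial t : ℝ))
        = (∑ s ∈ Finset.range N, a s * x ^ s / (Nat.factorial s : ℝ))
          + a N * x ^ N / (Nat.factorial N : ℝ) := Finset.sum_range_succ _ _
    have hmono' : ∀ s ∈ Finset.range N, a (s + 1) * x ^ s / (Nat.factorial s : ℝ)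
        ≤ a s * x ^ s / (Nat.factorial s : ℝ) := by
      intro s hs
      have hs' : s < N := Finset.mem_range.mp hs
      have : P (s + 1) ≤ P (s + 2) := hmono (s + 1) (by omega) (by omega)
      have ha' : a (s + 1) ≤ a s := by simp only [ha]; linarith
      have hnn : (0 : ℝ) ≤ x ^ s / (Nat.factorial s : ℝ) := by positivity
      calc a (s + 1) * x ^ s / (Nat.factorial s : ℝ)
          = a (s + 1) * (x ^ s / (Nat.factorial s : ℝ)) := by ring
        _ ≤ a s * (x ^ s / (Nat.factorial s : ℝ)) := mul_le_mul_of_nonneg_right ha' hnn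
        _ = a s * x ^ s / (Nat.factorial s : ℝ) := by ring
    have haN : 0 < a N * x ^ N / (Nat.factorial N : ℝ) := by
      have hPN := hP (N + 1) (by omega) (by omega)
      have : 0 < a N := by simp only [ha]; linarith [hPN.2]
      positivity
    have hlt : (∑ t ∈ Finset.range (N + 1), a t * ((t : ℝ) * x ^ (t - 1)) / (Nat.factorial t : ℝ))
        < ∑ t ∈ Finset.range (N + 1), a t * x ^ t / (Nat.factorial t : ℝ) := by
      rw [hS1, hS2]
      have := Finset.sum_le_sum hmono'
      linarith
    rw [hsum_eq]
    have hpos : 0 < Real.exp (-x) / η / η := by positivity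
    have := mul_neg_of_pos_of_neg hpos (by linarith : (∑ t ∈ Finset.range (N + 1),
      a t * ((t : ℝ) * x ^ (t - 1)) / (Nat.factorial t : ℝ))
        - (∑ t ∈ Finset.range (N + 1), a t * x ^ t / (Nat.factorial t : ℝ)) < 0)
    exact this
  -- strict concavity on [0, ∞)
  have hderiv1 : deriv φ = φ' := funext fun G => (hD1 G).deriv
  have hconc : StrictConcaveOn ℝ (Set.Ici (0 : ℝ)) φ := by
    apply strictConcaveOn_of_deriv2_neg (convex_Ici 0) hcont.continuousOn
    intro x hx
    rw [interior_Ici] at hx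
    have : deriv^[2] φ x = deriv (deriv φ) x := rfl
    rw [this, hderiv1, (hD2 x).deriv]
    exact hneg x hx
  -- value at 0
  have hsum0 : ∀ t : ℕ, (∑ k ∈ Finset.range (t + 1),
      (1 / (Nat.factorial k : ℝ)) * (0 : ℝ) ^ k) = 1 := by
    intro t
    rw [Finset.sum_eq_single 0]
    · simp
    · intro b _ hb
      simp [zero_pow hb]
    · intro h
      exact absurd (Finset.mem_range.mpr (by omega)) h
  have hφ0 : φ 0 = 0 := by
    rw [hφdef]
    simp only [zero_div, neg_zero, Real.exp_zero, one_mul, zero_mul, sub_zero]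
    rw [Finset.sum_congr rfl (fun t _ => by rw [hsum0 t])]
    simp
  -- derivative at 0 is positive
  have hφ'0 : 0 < φ' 0 := by
    have hsum : (∑ t ∈ Finset.range T, a t *
        (Real.exp (-(0 / η)) * (0 / η) ^ t / (Nat.factorial t : ℝ)) / η) = a 0 / η := by
      rw [Finset.sum_eq_single 0]
      · simp
      · intro b _ hb
        simp [zero_div, zero_pow hb]
      · intro h
        exact absurd (Finset.mem_range.mpr (by omega)) h
    rw [hφ'def]
    simp only
    rw [hsum]
    simp only [ha]
    linarith [hslope]
  -- a point just right of 0 where φ is positive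
  set G₀ : ℝ := ((T : ℝ) + 1) / (1 - c) with hG₀
  have hG₀pos : 0 < G₀ := by positivity
  have hev1 : ∀ᶠ y in nhdsWithin 0 {(0 : ℝ)}ᶜ, 0 < slope φ 0 y :=
    (hasDerivAt_iff_tendsto_slope.mp (hD1 0)).eventually (eventually_gt_nhds hφ'0)
  have hev2 : ∀ᶠ y in nhdsWithin 0 (Set.Ioi (0 : ℝ)), 0 < slope φ 0 y :=
    hev1.filter_mono (nhdsWithin_mono 0 (fun y hy => ne_of_gt hy))
  have hev3 : ∀ᶠ y in nhdsWithin 0 (Set.Ioi (0 : ℝ)), y < G₀ :=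
    eventually_nhdsWithin_of_eventually_nhds (eventually_lt_nhds hG₀pos)
  obtain ⟨ε, ⟨hεslope, hεG₀⟩, hε0⟩ := ((hev2.and hev3).and self_mem_nhdsWithin).exists
  have hεpos : 0 < ε := hε0
  have hφε : 0 < φ ε := by
    rw [slope_def_field, hφ0, sub_zero, sub_zero] at hεslope
    have : φ ε = (φ ε / ε) * ε := (div_mul_cancel₀ _ (ne_of_gt hεpos)).symm
    rw [this]
    exact mul_pos hεslope hεpos
  -- φ is negative at G₀
  have hφG₀ : φ G₀ < 0 := by
    have hbound : (∑ t ∈ Finset.range T, a t *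
        (1 - Real.exp (-(G₀ / η)) *
          ∑ k ∈ Finset.range (t + 1), (1 / (Nat.factorial k : ℝ)) * (G₀ / η) ^ k)) ≤ T := by
      calc (∑ t ∈ Finset.range T, a t *
          (1 - Real.exp (-(G₀ / η)) *
            ∑ k ∈ Finset.range (t + 1), (1 / (Nat.factorial k : ℝ)) * (G₀ / η) ^ k))
          ≤ ∑ _t ∈ Finset.range T, (1 : ℝ) := by
            apply Finset.sum_le_sum
            intro t ht
            have ht' := Finset.mem_range.mp ht
            have hPt := hP (t + 1) (by omega) (by omega)
            have ha0 : 0 ≤ a t := by simp only [ha]; linarith [hPt.2]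
            have ha1 : a t ≤ 1 := by simp only [ha]; linarith [hPt.1]
            have hx0 : (0 : ℝ) ≤ G₀ / η := le_of_lt (div_pos hG₀pos hη)
            have hSnn : 0 ≤ Real.exp (-(G₀ / η)) *
                ∑ k ∈ Finset.range (t + 1), (1 / (Nat.factorial k : ℝ)) * (G₀ / η) ^ k := by
              apply mul_nonneg (Real.exp_nonneg _)
              apply Finset.sum_nonneg
              intro k _
              positivity
            nlinarith
        _ = T := by simp
    have hval : G₀ * (1 - c) = (T : ℝ) + 1 := by
      rw [hG₀]
      field_simp
    rw [hφdef]
    simp only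
    linarith [hbound, hval]
  -- existence via IVT
  have hεle : ε ≤ G₀ := le_of_lt hεG₀
  have hIVT := intermediate_value_Icc' hεle hcont.continuousOn (f := φ)
  have h0mem : (0 : ℝ) ∈ Set.Icc (φ G₀) (φ ε) := ⟨le_of_lt hφG₀, le_of_lt hφε⟩
  obtain ⟨r, hrIcc, hr0⟩ := hIVT h0mem
  have hrpos : 0 < r := lt_of_lt_of_le hεpos hrIcc.1
  -- uniqueness via strict concavity
  have huniq : ∀ G1 G2 : ℝ, 0 < G1 → 0 < G2 → φ G1 = 0 → φ G2 = 0 → G1 = G2 := by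
    intro G1 G2 h1 h2 hz1 hz2
    by_contra hne
    -- wlog G1 < G2
    have key : ∀ A B : ℝ, 0 < A → 0 < B → φ A = 0 → φ B = 0 → A < B → False := by
      intro A B hA hB hzA hzB hAB
      have hb : 0 < A / B := div_pos hA hB
      have ha' : 0 < 1 - A / B := by
        rw [sub_pos, div_lt_one hB]; exact hAB
      have hab : (1 - A / B) + A / B = 1 := by ring
      have h := hconc.2 (Set.self_mem_Ici) (Set.mem_Ici.mpr (le_of_lt hB))
        (ne_of_lt hB) ha' hb hab
      rw [smul_eq_mul, smul_eq_mul, smul_eq_mul, smul_eq_mul] at h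
      have harg : (1 - A / B) * 0 + A / B * B = A := by
        field_simp
        ring
      rw [harg, hφ0, hzB, hzA] at h
      simp at h
    rcases lt_or_gt_of_ne hne with h | h
    · exact key G1 G2 h1 h2 hz1 hz2 h
    · exact key G2 G1 h2 h1 hz2 hz1 h
  -- translate between the equation and φ = 0
  have htrans : ∀ G : ℝ, (G * (1 - c) = ∑ t ∈ Finset.range T, (1 - P (t + 1)) *
      (1 - Real.exp (-(G / η)) *
        ∑ k ∈ Finset.range (t + 1), (1 / (Nat.factorial k : ℝ)) * (G / η) ^ k)) ↔ φ G = 0 := by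
    intro G
    rw [hφdef]
    simp only [ha]
    constructor
    · intro h; rw [← h]; ring
    · intro h; linarith [h]
  refine ⟨r, ⟨hrpos, (htrans r).mpr hr0⟩, ?_⟩
  rintro y ⟨hy, hyeq⟩
  exact huniq y r hy hrpos ((htrans y).mp hyeq) hr0
end

section
/- For T = 1, the convergence-boundary equation from the paper reduces to: the load threshold G* of any IRSA scheme with Λ_1 = 0 and P_{E|1}(1+e) < 1/2 satisfies G* ≤ (1 - P_{E|1})/(1 - P_{E|1}²(1+e)²) · (1 - exp(-G*/η)). In particular, when P_{E|1} = 0 this recovers G* ≤ 1 - exp(-G*/η). -/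
/-- Converse bound for T = 1, Λ₁ = 0: the open-tunnel condition implies the
bound on the load threshold G*. -/
theorem stmt11 (G η PE1 e : ℝ) (hG : 0 < G) (hη : 0 < η)
    (hPE1 : 0 ≤ PE1) (he : 0 ≤ e) (hhalf : PE1 * (1 + e) < 1 / 2)
    (htunnel : (∫ q in (0 : ℝ)..1, (1 - (1 - PE1) * Real.exp (-(G * q / η))))
        + η - η * PE1 ^ 2 * (1 + e) ^ 2 ≤ 1) :
    G ≤ (1 - PE1) / (1 - PE1 ^ 2 * (1 + e) ^ 2) * (1 - Real.exp (-(G / η))) := by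
  have hcpos : 0 < G / η := div_pos hG hη
  have hcne : G / η ≠ 0 := hcpos.ne'
  have hexp : ∫ q in (0:ℝ)..1, Real.exp (-(G * q / η))
      = (1 - Real.exp (-(G / η))) / (G / η) := by
    have h1 : ∀ q : ℝ, -(G * q / η) = q * (-(G / η)) := by
      intro q; ring
    simp_rw [h1]
    rw [intervalIntegral.integral_comp_mul_right Real.exp (neg_ne_zero.mpr hcne)]
    rw [integral_exp, smul_eq_mul, one_mul, zero_mul, Real.exp_zero]
    rw [eq_div_iff hcne]
    field_simp
    ring
  have hcont : Continuous fun q : ℝ => Real.exp (-(G * q / η)) := by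
    exact Real.continuous_exp.comp (by continuity)
  have hint : ∫ q in (0:ℝ)..1, (1 - (1 - PE1) * Real.exp (-(G * q / η)))
      = 1 - (1 - PE1) * ((1 - Real.exp (-(G / η))) / (G / η)) := by
    rw [intervalIntegral.integral_sub (intervalIntegrable_const)
      ((hcont.intervalIntegrable 0 1).const_mul _),
      intervalIntegral.integral_const_mul, hexp]
    simp
  rw [hint] at htunnel
  have hD : 0 < 1 - PE1 ^ 2 * (1 + e) ^ 2 := by
    have h2 : (PE1 * (1 + e)) ^ 2 < (1/2 : ℝ) ^ 2 := by
      apply pow_lt_pow_left₀ hhalf (by positivity)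
      norm_num
    nlinarith
  have key : η * (1 - PE1 ^ 2 * (1 + e) ^ 2)
      ≤ (1 - PE1) * ((1 - Real.exp (-(G / η))) / (G / η)) := by nlinarith
  rw [div_mul_eq_mul_div, le_div_iff₀ hD]
  calc G * (1 - PE1 ^ 2 * (1 + e) ^ 2)
      = (G / η) * (η * (1 - PE1 ^ 2 * (1 + e) ^ 2)) := by field_simp
    _ ≤ (G / η) * ((1 - PE1) * ((1 - Real.exp (-(G / η))) / (G / η))) :=
        mul_le_mul_of_nonneg_left key hcpos.le
    _ = (1 - PE1) * (1 - Real.exp (-(G / η))) := by field_simp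
end

section
/- Let n ≥ 1, σ' > 0, and define f(x) = (1/√(2πσ'²))·Σ_{i=-∞}^{∞} exp(-(x-2i)²/(2σ'²)) for x ∈ [0,2). Then ∫_{1/2}^{3/2} f(x) dx = 2·Σ_{i=0}^{∞} [Q((1+4i)/(2σ')) - Q((3+4i)/(2σ'))], where Q(x) = (1/√(2π))·∫_x^∞ e^{-z²/2} dz. -/
open MeasureTheory Real Set

lemma aux_sum_exp (c : ℝ) (hc : 0 < c) : Summable (fun i : ℤ => Real.exp (-c * (i : ℝ) ^ 2)) := by
  have hnat : Summable (fun n : ℕ => Real.exp (-c * (n : ℝ) ^ 2)) := by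
    have hgeo : Summable (fun n : ℕ => Real.exp (-c) ^ n) :=
      summable_geometric_of_lt_one (Real.exp_pos _).le
        (by rw [Real.exp_lt_one_iff]; linarith)
    refine Summable.of_nonneg_of_le (fun n => (Real.exp_pos _).le) (fun n => ?_) hgeo
    rw [← Real.exp_nat_mul]
    apply Real.exp_le_exp.mpr
    have h2 : (n : ℝ) ≤ (n : ℝ) ^ 2 := by exact_mod_cast Nat.le_self_pow two_ne_zero n
    nlinarith
  apply Summable.of_nat_of_neg <;> simpa using hnat

lemma aux_integrable {σ' : ℝ} (hσ : 0 < σ') :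
    Integrable (fun u : ℝ => Real.exp (-u ^ 2 / (2 * σ' ^ 2))) := by
  have h : ∀ u : ℝ, -u ^ 2 / (2 * σ' ^ 2) = -(1 / (2 * σ' ^ 2)) * u ^ 2 := fun u => by ring
  simp_rw [h]
  exact integrable_exp_neg_mul_sq (by positivity)

lemma aux_split {σ' : ℝ} (hσ : 0 < σ') {a b : ℝ} (hab : a ≤ b) :
    ∫ u in Ioc a b, Real.exp (-u ^ 2 / (2 * σ' ^ 2))
      = (∫ u in Ioi a, Real.exp (-u ^ 2 / (2 * σ' ^ 2)))
        - ∫ u in Ioi b, Real.exp (-u ^ 2 / (2 * σ' ^ 2)) := by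
  have hint := aux_integrable hσ
  have h := setIntegral_union (Ioc_disjoint_Ioi (le_refl b) (a := a)) (measurableSet_Ioi (a := b))
    hint.integrableOn hint.integrableOn (μ := volume)
  rw [Ioc_union_Ioi_eq_Ioi hab] at h
  linarith

lemma aux_scale {σ' : ℝ} (hσ : 0 < σ') (t : ℝ) :
    ∫ u in Ioi t, Real.exp (-u ^ 2 / (2 * σ' ^ 2))
      = σ' * ∫ z in Ioi (t / σ'), Real.exp (-z ^ 2 / 2) := by
  have h := integral_comp_mul_left_Ioi (fun u => Real.exp (-u ^ 2 / (2 * σ' ^ 2))) (t / σ') hσ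
  rw [mul_div_cancel₀ _ hσ.ne'] at h
  have h2 : ∀ x : ℝ, Real.exp (-(σ' * x) ^ 2 / (2 * σ' ^ 2)) = Real.exp (-x ^ 2 / 2) := by
    intro x; congr 1; field_simp
  simp_rw [h2] at h
  rw [h, smul_eq_mul, ← mul_assoc, mul_inv_cancel₀ hσ.ne', one_mul]

lemma aux_total : ∫ z : ℝ, Real.exp (-z ^ 2 / 2) = Real.sqrt (2 * Real.pi) := by
  have h : ∀ z : ℝ, -z ^ 2 / 2 = -(1/2) * z ^ 2 := fun z => by ring
  simp_rw [h, integral_gaussian]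
  rw [show (Real.pi / (1/2) : ℝ) = 2 * Real.pi by ring]

lemma aux_neg (x : ℝ) :
    ∫ z in Ioi (-x), Real.exp (-z ^ 2 / 2)
      = Real.sqrt (2 * Real.pi) - ∫ z in Ioi x, Real.exp (-z ^ 2 / 2) := by
  have hint : Integrable (fun z : ℝ => Real.exp (-z ^ 2 / 2)) := by
    have := aux_integrable (σ' := 1) one_pos
    simpa using this
  have hsplit := intervalIntegral.integral_Iic_add_Ioi (b := -x) hint.integrableOn hint.integrableOn
  have hneg := integral_comp_neg_Ioi x (fun z : ℝ => Real.exp (-z ^ 2 / 2))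
  simp only [neg_sq] at hneg
  rw [aux_total] at hsplit
  rw [← hneg] at hsplit
  linarith


/-- Integral of the modulo-2 wrapped Gaussian density over [1/2, 3/2] equals the
alternating series of Gaussian tail probabilities. -/
theorem stmt14 (σ' : ℝ) (hσ : 0 < σ')
    (f : ℝ → ℝ)
    (hf : ∀ x, f x = (1 / Real.sqrt (2 * Real.pi * σ' ^ 2)) *
        ∑' i : ℤ, Real.exp (-(x - 2 * i) ^ 2 / (2 * σ' ^ 2)))
    (Q : ℝ → ℝ)
    (hQ : ∀ x, Q x = (1 / Real.sqrt (2 * Real.pi)) * ∫ z in Set.Ioi x, Real.exp (-z ^ 2 / 2)) :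
    (∫ x in (1 / 2 : ℝ)..(3 / 2), f x)
      = 2 * ∑' i : ℕ, (Q ((1 + 4 * i) / (2 * σ')) - Q ((3 + 4 * i) / (2 * σ'))) := by
  have hs2π : (0:ℝ) < Real.sqrt (2 * Real.pi) := Real.sqrt_pos.mpr (by positivity)
  have hne : Real.sqrt (2 * Real.pi) ≠ 0 := ne_of_gt hs2π
  set g : ℤ → ℝ → ℝ := fun i x => Real.exp (-(x - 2 * i) ^ 2 / (2 * σ' ^ 2)) with hg
  -- integrability
  have hmeas : ∀ i : ℤ, IntegrableOn (g i) (Ioc (1/2:ℝ) (3/2)) :=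
    fun i => ((aux_integrable hσ).comp_sub_right (2 * (i:ℝ))).integrableOn
  -- pointwise bound
  have hbound : ∀ i : ℤ, ∀ x ∈ Ioc (1/2:ℝ) (3/2),
      g i x ≤ Real.exp (-(1/(8*σ'^2)) * (i:ℝ)^2) := by
    intro i x hx
    obtain ⟨hx1, hx2⟩ := hx
    have key : ((i:ℝ))^2 ≤ 4 * (x - 2*i)^2 := by
      rcases le_or_gt i 0 with hi | hi
      · have hi' : (i:ℝ) ≤ 0 := by exact_mod_cast hi
        nlinarith
      · have hi' : (1:ℝ) ≤ (i:ℝ) := by exact_mod_cast hi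
        nlinarith
    apply Real.exp_le_exp.mpr
    rw [neg_mul, neg_div, neg_le_neg_iff, one_div, inv_mul_eq_div, div_le_div_iff₀ (by positivity) (by positivity)]
    nlinarith [sq_nonneg σ']
  -- summability of set integrals
  have hsum : Summable (fun i : ℤ => ∫ x in Ioc (1/2:ℝ) (3/2), ‖g i x‖) := by
    refine Summable.of_nonneg_of_le
      (fun i => integral_nonneg (fun x => norm_nonneg _)) (fun i => ?_)
      (aux_sum_exp (1/(8*σ'^2)) (by positivity))
    have h1 : ∫ x in Ioc (1/2:ℝ) (3/2), ‖g i x‖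
        ≤ ∫ _x in Ioc (1/2:ℝ) (3/2), Real.exp (-(1/(8*σ'^2)) * (i:ℝ)^2) := by
      refine setIntegral_mono_on (hmeas i).norm
        (integrableOn_const measure_Ioc_lt_top.ne) measurableSet_Ioc ?_
      intro x hx
      rw [Real.norm_of_nonneg (Real.exp_pos _).le]
      exact hbound i x hx
    calc ∫ x in Ioc (1/2:ℝ) (3/2), ‖g i x‖
        ≤ ∫ _x in Ioc (1/2:ℝ) (3/2), Real.exp (-(1/(8*σ'^2)) * (i:ℝ)^2) := h1
      _ = Real.exp (-(1/(8*σ'^2)) * (i:ℝ)^2) := by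
          rw [setIntegral_const, Real.volume_real_Ioc, smul_eq_mul]
          norm_num
  have hsum' : Summable (fun i : ℤ => ∫ x in Ioc (1/2:ℝ) (3/2), g i x) := by
    refine hsum.congr fun i => ?_
    refine integral_congr_ae (Filter.Eventually.of_forall fun x => ?_)
    exact Real.norm_of_nonneg (Real.exp_pos _).le
  -- interchange
  have hswap : ∫ x in Ioc (1/2:ℝ) (3/2), (∑' i : ℤ, g i x)
      = ∑' i : ℤ, ∫ x in Ioc (1/2:ℝ) (3/2), g i x :=
    (integral_tsum_of_summable_integral_norm (fun i => hmeas i) hsum).symm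
  -- per-term value
  have hterm : ∀ i : ℤ, ∫ x in Ioc (1/2:ℝ) (3/2), g i x
      = σ' * Real.sqrt (2*Real.pi) *
        (Q ((1 - 4*(i:ℝ))/(2*σ')) - Q ((3 - 4*(i:ℝ))/(2*σ'))) := by
    intro i
    have step1 : ∫ x in Ioc (1/2:ℝ) (3/2), g i x
        = ∫ u in Ioc (1/2 - 2*(i:ℝ)) (3/2 - 2*(i:ℝ)), Real.exp (-u^2/(2*σ'^2)) := by
      rw [← intervalIntegral.integral_of_le (by norm_num : (1/2:ℝ) ≤ 3/2)]
      rw [show (∫ x in (1/2:ℝ)..(3/2), g i x)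
          = ∫ x in (1/2:ℝ)..(3/2), (fun u => Real.exp (-u^2/(2*σ'^2))) (x - 2*(i:ℝ)) from rfl]
      rw [intervalIntegral.integral_comp_sub_right (fun u => Real.exp (-u^2/(2*σ'^2))) (2*(i:ℝ))]
      rw [intervalIntegral.integral_of_le (by linarith)]
    rw [step1, aux_split hσ (by linarith), aux_scale hσ, aux_scale hσ]
    have e1 : (1/2 - 2*(i:ℝ))/σ' = (1 - 4*(i:ℝ))/(2*σ') := by
      field_simp; ring
    have e3 : (3/2 - 2*(i:ℝ))/σ' = (3 - 4*(i:ℝ))/(2*σ') := by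
      field_simp; ring
    rw [e1, e3, hQ, hQ]
    field_simp
  -- Q of negative
  have hQneg : ∀ x, Q (-x) = 1 - Q x := by
    intro x
    rw [hQ, hQ, aux_neg]
    field_simp
  -- the ℤ-indexed series
  set T : ℕ → ℝ := fun m => Q ((1 + 4*(m:ℝ))/(2*σ')) - Q ((3 + 4*(m:ℝ))/(2*σ')) with hT
  set hZ : ℤ → ℝ := fun i => Q ((1 - 4*(i:ℝ))/(2*σ')) - Q ((3 - 4*(i:ℝ))/(2*σ')) with hhZ
  have Sh : Summable hZ := by
    refine (hsum'.mul_left ((σ' * Real.sqrt (2*Real.pi))⁻¹)).congr fun i => ?_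
    rw [hterm i, ← mul_assoc, inv_mul_cancel₀ (by positivity), one_mul]
  have Sh_nat : Summable (fun n : ℕ => hZ n) :=
    Sh.comp_injective (fun a b h => by exact_mod_cast h)
  have Sh_neg : Summable (fun n : ℕ => hZ (-(n+1))) :=
    Sh.comp_injective (fun a b h => by omega)
  have ha : ∀ n : ℕ, hZ (-(n+1)) = T (n+1) := by
    intro n
    simp only [hhZ, hT]
    congr 2 <;> push_cast <;> ring
  have hb : ∀ n : ℕ, hZ ((n:ℤ)+1) = T n := by
    intro n
    simp only [hhZ, hT]
    have e1 : ((1:ℝ) - 4*(((n:ℤ):ℝ)+1))/(2*σ') = -(((3:ℝ) + 4*(n:ℝ))/(2*σ')) := by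
      push_cast; rw [← neg_div]; ring_nf
    have e2 : ((3:ℝ) - 4*(((n:ℤ):ℝ)+1))/(2*σ') = -(((1:ℝ) + 4*(n:ℝ))/(2*σ')) := by
      push_cast; rw [← neg_div]; ring_nf
    push_cast
    push_cast at e1 e2
    rw [e1, e2, hQneg, hQneg]
    ring
  have hc0 : hZ 0 = T 0 := by
    simp only [hhZ, hT]
    norm_num
  have ST1 : Summable (fun n : ℕ => T (n+1)) := Sh_neg.congr ha
  have ST : Summable T := (summable_nat_add_iff 1).mp ST1
  have htsumZ : ∑' i : ℤ, hZ i = 2 * ∑' m : ℕ, T m := by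
    rw [tsum_of_nat_of_neg_add_one Sh_nat Sh_neg]
    have h1 : ∑' n : ℕ, hZ n = hZ 0 + ∑' n : ℕ, hZ ((n:ℤ)+1) := by
      rw [Summable.tsum_eq_zero_add Sh_nat]
      norm_cast
    have h2 : ∑' n : ℕ, hZ ((n:ℤ)+1) = ∑' m : ℕ, T m := tsum_congr hb
    have h3 : ∑' n : ℕ, hZ (-(n+1)) = ∑' m : ℕ, T m - T 0 := by
      rw [tsum_congr ha]
      have h4 := Summable.tsum_eq_zero_add ST
      linarith
    rw [h1, h2, h3, hc0]
    ring
  -- assemble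
  rw [intervalIntegral.integral_of_le (by norm_num : (1/2:ℝ) ≤ 3/2)]
  simp_rw [hf]
  rw [MeasureTheory.integral_const_mul]
  simp only [hg] at hswap
  rw [hswap]
  have hterm' : (∑' i : ℤ, ∫ x in Ioc (1/2:ℝ) (3/2), g i x)
      = σ' * Real.sqrt (2*Real.pi) * ∑' i : ℤ, hZ i := by
    rw [tsum_congr hterm, tsum_mul_left]
  simp only [hg] at hterm'
  rw [hterm', htsumZ]
  have hC : Real.sqrt (2*Real.pi*σ'^2) = Real.sqrt (2*Real.pi) * σ' := by
    rw [Real.sqrt_mul (by positivity), Real.sqrt_sq hσ.le]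
  rw [hC]
  have : (1 / (Real.sqrt (2*Real.pi) * σ')) * (σ' * Real.sqrt (2*Real.pi) * (2 * ∑' m : ℕ, T m))
      = 2 * ∑' m : ℕ, T m := by
    field_simp
  rw [this]
end

section
/- Let H be the parity-check matrix of a T-error-correcting binary code of length M (so every set of 2T columns of H is linearly independent over GF(2)), and let the codebook C consist of the M columns of H. Then for any two multisets S₁, S₂ of at most T codewords each with S₁ ≠ S₂ (as multisets of distinct elements — i.e., any two distinct subsets of C of size ≤ T), the real-valued sums Σ_{c ∈ S₁} c and Σ_{c ∈ S₂} c (computed coordinatewise over the integers) are different. Consequently, the map from subsets of C of size at most T to their integer sums is injective. -/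
/-- Zero-error property of the BPR code for the T-user binary adder channel:
if every 2T columns of H are linearly independent over GF(2), then distinct
subsets of columns of size ≤ T have distinct coordinatewise integer sums. -/
theorem stmt15 (M n T : ℕ) (col : Fin M → Fin n → ZMod 2)
    (hli : ∀ S : Finset (Fin M), S.card ≤ 2 * T →
      LinearIndependent (ZMod 2) (fun i : S => col i.1)) :
    ∀ S₁ S₂ : Finset (Fin M), S₁.card ≤ T → S₂.card ≤ T →
      (∑ i ∈ S₁, (fun j => ((col i j).val : ℤ))) =
        (∑ i ∈ S₂, (fun j => ((col i j).val : ℤ))) →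
      S₁ = S₂ := by
  intro S₁ S₂ h₁ h₂ hsum
  -- mod-2 sums are equal
  have hmod : ∀ j, (∑ i ∈ S₁, col i j) = ∑ i ∈ S₂, col i j := by
    intro j
    have := congrFun hsum j
    simp only [Finset.sum_apply] at this
    have := congrArg (fun z : ℤ => (z : ZMod 2)) this
    simpa [ZMod.natCast_val, ZMod.intCast_cast, ZMod.cast_id] using this
  -- symmetric difference sums to zero
  set D : Finset (Fin M) := (S₁ \ S₂) ∪ (S₂ \ S₁) with hD
  have hdisj : Disjoint (S₁ \ S₂) (S₂ \ S₁) :=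
    disjoint_sdiff_sdiff
  have hzero : ∀ j, (∑ i ∈ D, col i j) = 0 := by
    intro j
    have e1 : (∑ i ∈ S₁ \ S₂, col i j) + ∑ i ∈ S₁ ∩ S₂, col i j = ∑ i ∈ S₁, col i j := by
      rw [← Finset.sum_union (Finset.disjoint_sdiff_inter S₁ S₂), Finset.sdiff_union_inter]
    have e2 : (∑ i ∈ S₂ \ S₁, col i j) + ∑ i ∈ S₁ ∩ S₂, col i j = ∑ i ∈ S₂, col i j := by
      rw [Finset.inter_comm,
        ← Finset.sum_union (Finset.disjoint_sdiff_inter S₂ S₁), Finset.sdiff_union_inter]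
    have heq : (∑ i ∈ S₁ \ S₂, col i j) = ∑ i ∈ S₂ \ S₁, col i j := by
      have := hmod j
      rw [← e1, ← e2] at this
      exact add_right_cancel this
    rw [hD, Finset.sum_union hdisj, heq]
    have : (2 : ZMod 2) = 0 := by decide
    calc (∑ i ∈ S₂ \ S₁, col i j) + ∑ i ∈ S₂ \ S₁, col i j
        = 2 * ∑ i ∈ S₂ \ S₁, col i j := by ring
      _ = 0 := by rw [this]; ring
  have hcard : D.card ≤ 2 * T := by
    have hDu : D.card ≤ (S₁ \ S₂).card + (S₂ \ S₁).card := Finset.card_union_le _ _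
    have c1 : (S₁ \ S₂).card ≤ T := le_trans (Finset.card_le_card (Finset.sdiff_subset)) h₁
    have c2 : (S₂ \ S₁).card ≤ T := le_trans (Finset.card_le_card (Finset.sdiff_subset)) h₂
    omega
  have hliD := hli D hcard
  have hempty : D = ∅ := by
    by_contra hne
    obtain ⟨x, hx⟩ := Finset.nonempty_iff_ne_empty.2 hne
    have := Fintype.linearIndependent_iff.1 hliD (fun _ => 1) ?_ ⟨x, hx⟩
    · exact one_ne_zero this
    · funext j
      have : (∑ i : D, col i.1 j) = ∑ i ∈ D, col i j := by
        rw [← Finset.sum_attach D (fun i => col i j)]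
        rfl
      simp only [Finset.sum_apply, one_smul, Pi.zero_apply]
      rw [this]
      exact hzero j
  have hsub1 : S₁ ⊆ S₂ := by
    intro a ha
    by_contra hna
    have : a ∈ D := Finset.mem_union.2 (Or.inl (Finset.mem_sdiff.2 ⟨ha, hna⟩))
    rw [hempty] at this; exact absurd this (Finset.notMem_empty a)
  have hsub2 : S₂ ⊆ S₁ := by
    intro a ha
    by_contra hna
    have : a ∈ D := Finset.mem_union.2 (Or.inr (Finset.mem_sdiff.2 ⟨ha, hna⟩))
    rw [hempty] at this; exact absurd this (Finset.notMem_empty a)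
  exact Finset.Subset.antisymm hsub1 hsub2
end

section
/- Let 0 ≤ q ≤ 1, G > 0, d̄ > 0, T ≥ 1, and 0 ≤ P_{E|t} ≤ 1 for 1 ≤ t ≤ T. Then the double series identity holds: Σ_{h≥1} ρ_h · Σ_{t=1}^{min(T,h)} (1-P_{E|t})·C(h-1, t-1)·q^{t-1}·(1-q)^{h-t} = exp(-G·d̄·q)·Σ_{t=1}^{T} (1-P_{E|t})·(G·d̄·q)^{t-1}/(t-1)!, where ρ_h = e^{-G·d̄}·(G·d̄)^{h-1}/(h-1)! and C(·,·) denotes the binomial coefficient. -/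
open Finset

private lemma real_exp_tsum (y : ℝ) : ∑' n : ℕ, y ^ n / n.factorial = Real.exp y := by
  rw [Real.exp_eq_exp_ℝ, NormedSpace.exp_eq_tsum_div]

/-- The shifted exponential-series term. -/
private noncomputable def D (x q : ℝ) (t h : ℕ) : ℝ :=
  if t ≤ h then (x * (1 - q)) ^ (h - t) / (h - t).factorial else 0

private lemma summable_D (x q : ℝ) (t : ℕ) : Summable (D x q t) := by
  apply (summable_nat_add_iff t).mp
  have : (fun n : ℕ => D x q t (n + t)) = fun n : ℕ => (x * (1 - q)) ^ n / n.factorial := by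
    funext n
    simp [D, Nat.le_add_left]
  rw [this]
  exact Real.summable_pow_div_factorial _

private lemma tsum_D (x q : ℝ) (t : ℕ) :
    ∑' h : ℕ, D x q t h = Real.exp (x * (1 - q)) := by
  have h1 := Summable.sum_add_tsum_nat_add (f := D x q t) t (summable_D x q t)
  have h2 : ∑ i ∈ Finset.range t, D x q t i = 0 := by
    apply Finset.sum_eq_zero
    intro i hi
    simp only [Finset.mem_range] at hi
    simp [D, Nat.not_le.mpr hi]
  have h3 : (fun n : ℕ => D x q t (n + t)) = fun n : ℕ => (x * (1 - q)) ^ n / n.factorial := by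
    funext n
    simp [D, Nat.le_add_left]
  rw [h2, zero_add, h3] at h1
  rw [← h1, real_exp_tsum]

private lemma f_eq_D (x q : ℝ) (t h : ℕ) :
    x ^ h / h.factorial * ((h.choose t : ℝ) * q ^ t * (1 - q) ^ (h - t))
      = (x * q) ^ t / t.factorial * D x q t h := by
  by_cases ht : t ≤ h
  · have hfac : ((h - t).factorial : ℝ) ≠ 0 := Nat.cast_ne_zero.mpr (Nat.factorial_ne_zero _)
    have htf : ((t).factorial : ℝ) ≠ 0 := Nat.cast_ne_zero.mpr (Nat.factorial_ne_zero _)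
    have hhf : ((h).factorial : ℝ) ≠ 0 := Nat.cast_ne_zero.mpr (Nat.factorial_ne_zero _)
    rw [D, if_pos ht, Nat.cast_choose ℝ ht]
    have hx : x ^ h = x ^ t * x ^ (h - t) := by
      rw [← pow_add, Nat.add_sub_cancel' ht]
    rw [hx, mul_pow, mul_pow]
    field_simp
  · rw [D, if_neg ht, Nat.choose_eq_zero_of_lt (Nat.lt_of_not_le ht)]
    simp

private lemma summable_f (x q : ℝ) (t : ℕ) :
    Summable (fun h : ℕ => x ^ h / h.factorial *
      ((h.choose t : ℝ) * q ^ t * (1 - q) ^ (h - t))) := by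
  have : (fun h : ℕ => x ^ h / h.factorial * ((h.choose t : ℝ) * q ^ t * (1 - q) ^ (h - t)))
      = fun h => (x * q) ^ t / t.factorial * D x q t h := by
    funext h; exact f_eq_D x q t h
  rw [this]
  exact (summable_D x q t).mul_left _

private lemma tsum_f (x q : ℝ) (t : ℕ) :
    ∑' h : ℕ, x ^ h / h.factorial * ((h.choose t : ℝ) * q ^ t * (1 - q) ^ (h - t))
      = Real.exp (x * (1 - q)) * (x * q) ^ t / t.factorial := by
  have : (fun h : ℕ => x ^ h / h.factorial * ((h.choose t : ℝ) * q ^ t * (1 - q) ^ (h - t)))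
      = fun h => (x * q) ^ t / t.factorial * D x q t h := by
    funext h; exact f_eq_D x q t h
  rw [this, tsum_mul_left, tsum_D]
  ring

/-- Poisson–binomial summation identity at the heart of the density-evolution
recursion for IRSA with T-MPR over a noisy channel (Theorem 1). -/
theorem stmt16 (q G dbar : ℝ) (hq : q ∈ Set.Icc (0 : ℝ) 1) (hG : 0 < G) (hd : 0 < dbar)
    (T : ℕ) (hT : 1 ≤ T) (P : ℕ → ℝ) (hP : ∀ t, 1 ≤ t → t ≤ T → 0 ≤ P t ∧ P t ≤ 1) :
    (∑' h : ℕ, (Real.exp (-(G * dbar)) * (G * dbar) ^ h / (Nat.factorial h)) *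
        ∑ t ∈ Finset.range (min T (h + 1)),
          (1 - P (t + 1)) * (Nat.choose h t) * q ^ t * (1 - q) ^ (h - t))
    = Real.exp (-(G * dbar * q)) *
        ∑ t ∈ Finset.range T, (1 - P (t + 1)) * (G * dbar * q) ^ t / (Nat.factorial t) := by
  set x := G * dbar with hx
  -- Step 1: rewrite each term as a sum over range T
  have step1 : ∀ h : ℕ,
      (Real.exp (-x) * x ^ h / (Nat.factorial h)) *
        ∑ t ∈ Finset.range (min T (h + 1)),
          (1 - P (t + 1)) * (Nat.choose h t) * q ^ t * (1 - q) ^ (h - t)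
      = ∑ t ∈ Finset.range T, Real.exp (-x) * (1 - P (t + 1)) *
          (x ^ h / h.factorial * ((h.choose t : ℝ) * q ^ t * (1 - q) ^ (h - t))) := by
    intro h
    have hsub : Finset.range (min T (h + 1)) ⊆ Finset.range T :=
      Finset.range_subset_range.mpr (min_le_left _ _)
    rw [← Finset.sum_subset hsub (by
      intro t htT htm
      simp only [Finset.mem_range, lt_min_iff, not_and, not_lt] at htT htm
      have : h < t := Nat.lt_of_succ_le (htm htT)
      rw [Nat.choose_eq_zero_of_lt this]
      simp)]
    rw [Finset.mul_sum]
    apply Finset.sum_congr rfl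
    intro t _
    ring
  rw [tsum_congr step1]
  rw [Summable.tsum_finsetSum (fun t _ => ((summable_f x q t).mul_left _))]
  have step2 : ∀ t ∈ Finset.range T,
      ∑' h : ℕ, Real.exp (-x) * (1 - P (t + 1)) *
        (x ^ h / h.factorial * ((h.choose t : ℝ) * q ^ t * (1 - q) ^ (h - t)))
      = Real.exp (-(x * q)) * ((1 - P (t + 1)) * (x * q) ^ t / t.factorial) := by
    intro t _
    rw [tsum_mul_left, tsum_f]
    rw [show Real.exp (-x) * (1 - P (t + 1)) * (Real.exp (x * (1 - q)) * (x * q) ^ t / t.factorial)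
        = (Real.exp (-x) * Real.exp (x * (1 - q))) * ((1 - P (t + 1)) * (x * q) ^ t / t.factorial)
        by ring, ← Real.exp_add]
    ring_nf
  rw [Finset.sum_congr rfl step2, ← Finset.mul_sum]
end
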